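/- arXiv:2503.14981 — 2 statements merged into one kernel-verified Lean document; each statement's English description precedes it below -/
import Mathlib

section
/- Let 𝔥 be a Euclidean space with spectral decomposition system (𝒳, S, γ, (Λ_a)_{a∈A}), and let D be a nonempty S-invariant subset of 𝒳 (i.e., s • x ∈ D for all x ∈ D and s ∈ S). Then: (i) the convex hull of γ⁻¹(D) equals γ⁻¹(conv D); and (ii) if D is convex, then the set of extreme points of γ⁻¹(D) equals γ⁻¹(set of extreme points of D). -/
/-!
The key fact is that for `Z = t • Z₁ + s • Z₂` (a convex combination), `γ Z` lies in the convex
hull of the `S`-orbit of `y = t • γ Z₁ + s • γ Z₂`. Since `τ` preserves norms and does not decrease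
inner products, it is 1-Lipschitz; as it selects a representative of each orbit, orbits are
compact, hence so are their convex hulls, and membership can be tested by separation. The support
function of the orbit of `y` is `u ↦ ⟪τ u, τ y⟫`, and choosing `a` with `Z = Λ a (γ Z)`,
`⟪u, γ Z⟫ = ⟪Λ a u, Z⟫ ≤ ⟪τ u, y⟫ ≤ ⟪τ u, τ y⟫` by the trace inequality.

Hence `γ ⁻¹' C` is convex for every convex invariant `C`, which with `Λ a '' conv D ⊆ conv (γ ⁻¹' D)`
gives (i). For (ii), an extreme point `γ Z` of `D` lies in `conv (orbit y) ⊆ D`, hence in the orbit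
itself, so `y` is extreme in `D` and `γ Z₁ = γ Z₂ = y`. Then `Z₁`, `Z₂` and `Z` have the same norm,
and strict convexity of the norm forces `Z₁ = Z₂ = Z`.
-/

open scoped InnerProductSpace

/-- A spectral decomposition system `(𝓧, S, γ, (Λ a)_{a ∈ A})` for a Euclidean space `𝓗`,
with spectral-induced ordering mapping `τ`. -/
structure SpectralDecompositionSystem
    (𝓗 : Type*) (𝓧 : Type*) [NormedAddCommGroup 𝓗] [InnerProductSpace ℝ 𝓗]
    [NormedAddCommGroup 𝓧] [InnerProductSpace ℝ 𝓧]
    (S : Type*) [Group S] [MulAction S 𝓧]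
    {A : Type*} (γ : 𝓗 → 𝓧) (Λ : A → 𝓧 →ₗ[ℝ] 𝓗) (τ : 𝓧 → 𝓧) : Prop where
  /-- `S` acts on `𝓧` by linear maps. -/
  smul_add_smul : ∀ (s : S) (c : ℝ) (x y : 𝓧), s • (c • x + y) = c • (s • x) + s • y
  /-- `S` acts on `𝓧` by isometries. -/
  norm_smul : ∀ (s : S) (x : 𝓧), ‖s • x‖ = ‖x‖
  /-- Each `Λ a` is a (linear) isometry. -/
  norm_lambda : ∀ (a : A) (x : 𝓧), ‖Λ a x‖ = ‖x‖
  /-- `τ` is `S`-invariant. -/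
  tau_smul : ∀ (s : S) (x : 𝓧), τ (s • x) = τ x
  /-- `τ x` belongs to the orbit `S • x`. -/
  tau_orbit : ∀ x : 𝓧, ∃ s : S, τ x = s • x
  /-- `γ ∘ Λ a = τ` for all `a ∈ A`. -/
  gamma_lambda : ∀ (a : A) (x : 𝓧), γ (Λ a x) = τ x
  /-- Every element of `𝓗` admits a spectral decomposition. -/
  exists_decomp : ∀ Z : 𝓗, ∃ a : A, Z = Λ a (γ Z)
  /-- Von Neumann-type trace inequality. -/
  inner_le : ∀ Z W : 𝓗, ⟪Z, W⟫_ℝ ≤ ⟪γ Z, γ W⟫_ℝ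

variable {𝓗 𝓧 : Type*} [NormedAddCommGroup 𝓗] [InnerProductSpace ℝ 𝓗]
  [FiniteDimensional ℝ 𝓗] [NormedAddCommGroup 𝓧] [InnerProductSpace ℝ 𝓧]
  [FiniteDimensional ℝ 𝓧] {S : Type*} [Group S] [MulAction S 𝓧]
  {A : Type*} [Nonempty A]

open Set

theorem exists_stdSimplex_sum_smul_eq_of_mem_convexHull {E : Type*} [AddCommGroup E]
    [Module ℝ E] [FiniteDimensional ℝ E] {s : Set E} {x : E} (hx : x ∈ convexHull ℝ s) :
    ∃ w ∈ stdSimplex ℝ (Fin (Module.finrank ℝ E + 1)), ∃ z : Fin (Module.finrank ℝ E + 1) → E,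
      (∀ i, z i ∈ s) ∧ ∑ i, w i • z i = x := by
  obtain ⟨ι, _, z, w, hzs, hai, hw0, hw1, rfl⟩ := eq_pos_convex_span_of_mem_convexHull hx
  have hcard : Fintype.card ι ≤ Module.finrank ℝ E + 1 :=
    hai.card_le_finrank_succ.trans (Nat.succ_le_succ (Submodule.finrank_le _))
  obtain ⟨e⟩ := Function.Embedding.nonempty_of_card_le (hcard.trans (Fintype.card_fin _).ge)
  obtain ⟨i₀⟩ : Nonempty ι := by
    by_contra h
    simp [not_nonempty_iff.mp h] at hw1
  let w' := Function.extend e w 0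
  let z' := Function.extend e z fun _ => z i₀
  have hw' : ∀ j ∉ range e, w' j = 0 := fun j hj => Function.extend_apply' _ _ _ (by simpa using hj)
  refine ⟨w', ⟨fun j => ?_, ?_⟩, z', fun j => ?_, ?_⟩
  · by_cases hj : j ∈ range e
    · obtain ⟨i, rfl⟩ := hj
      simpa [w', e.injective.extend_apply] using (hw0 i).le
    · exact (hw' j hj).ge
  · rw [← hw1]
    exact (Fintype.sum_of_injective e e.injective w w' hw' fun i =>
      (e.injective.extend_apply _ _ _).symm).symm
  · by_cases hj : j ∈ range e
    · obtain ⟨i, rfl⟩ := hj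
      simpa [z', e.injective.extend_apply] using hzs (mem_range_self i)
    · simpa [z', Function.extend_apply' _ _ _ (by simpa using hj)] using hzs (mem_range_self i₀)
  · refine (Fintype.sum_of_injective e e.injective _ _ (fun j hj => by simp [hw' j hj])
      fun i => ?_).symm
    simp [w', z', e.injective.extend_apply]

theorem IsCompact.convexHull_of_finiteDimensional {E : Type*} [NormedAddCommGroup E]
    [NormedSpace ℝ E] [FiniteDimensional ℝ E] {s : Set E} (hs : IsCompact s) :
    IsCompact (convexHull ℝ s) := by
  have hT : Continuous fun p : (Fin (Module.finrank ℝ E + 1) → ℝ) ×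
      (Fin (Module.finrank ℝ E + 1) → E) => ∑ i, p.1 i • p.2 i := by fun_prop
  convert ((isCompact_stdSimplex ℝ _).prod (isCompact_univ_pi fun _ => hs)).image hT
  ext x
  constructor
  · intro hx
    obtain ⟨w, hw, z, hz, rfl⟩ := exists_stdSimplex_sum_smul_eq_of_mem_convexHull hx
    exact ⟨(w, z), ⟨hw, fun i _ => hz i⟩, rfl⟩
  · rintro ⟨⟨w, z⟩, ⟨⟨hw0, hw1⟩, hz⟩, rfl⟩
    exact (convex_convexHull ℝ s).sum_mem (fun i _ => hw0 i) hw1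
      (fun i _ => subset_convexHull ℝ s (hz i (mem_univ i)))

theorem convexHull_orbit_subset {G X : Type*} [Group G] [AddCommGroup X] [Module ℝ X]
    [MulAction G X] {D : Set X} (hD : ∀ x ∈ D, ∀ g : G, g • x ∈ D) (hDc : Convex ℝ D)
    {y : X} (hy : y ∈ D) : convexHull ℝ (MulAction.orbit G y) ⊆ D :=
  convexHull_min (by rintro _ ⟨g, rfl⟩; exact hD y hy g) hDc

theorem mem_extremePoints_of_injective {𝕜 E F : Type*} [Semiring 𝕜] [PartialOrder 𝕜]
    [AddCommMonoid E] [Module 𝕜 E] [AddCommMonoid F] [Module 𝕜 F] {f : E →ₗ[𝕜] F}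
    (hf : Function.Injective f) {A : Set E} {B : Set F} (hAB : MapsTo f A B) {x : E}
    (hx : x ∈ A) (hfx : f x ∈ B.extremePoints 𝕜) : x ∈ A.extremePoints 𝕜 := by
  refine ⟨hx, fun x₁ hx₁ x₂ hx₂ hseg => ?_⟩
  obtain ⟨a, b, ha, hb, hab, rfl⟩ := hseg
  have hfseg : f (a • x₁ + b • x₂) ∈ openSegment 𝕜 (f x₁) (f x₂) :=
    ⟨a, b, ha, hb, hab, by rw [map_add, map_smul, map_smul]⟩
  exact hf ((mem_extremePoints_iff_left.mp hfx).2 _ (hAB hx₁) _ (hAB hx₂) hfseg)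

theorem eq_of_mem_openSegment_of_norm_le {E : Type*} [NormedAddCommGroup E] [NormedSpace ℝ E]
    [StrictConvexSpace ℝ E] {x y z : E} (hz : z ∈ openSegment ℝ x y) (hx : ‖x‖ ≤ ‖z‖)
    (hy : ‖y‖ ≤ ‖z‖) : x = z := by
  obtain ⟨a, b, ha, hb, hab, rfl⟩ := hz
  have hxy : x = y := by
    by_contra hne
    exact (norm_combo_lt_of_ne hx hy hne ha hb hab).false
  rw [← hxy, ← add_smul, hab, one_smul]

namespace SpectralDecompositionSystem

variable {H X G ι : Type*} [NormedAddCommGroup H] [InnerProductSpace ℝ H]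
  [NormedAddCommGroup X] [InnerProductSpace ℝ X] [Group G] [MulAction G X]
  {γ : H → X} {Λ : ι → X →ₗ[ℝ] H} {τ : X → X}

theorem smul_zero (hsys : SpectralDecompositionSystem H X G γ Λ τ) (g : G) :
    g • (0 : X) = 0 :=
  norm_eq_zero.mp ((hsys.norm_smul g 0).trans norm_zero)

def smulLinearIsometry (hsys : SpectralDecompositionSystem H X G γ Λ τ) (g : G) :
    X →ₗᵢ[ℝ] X where
  toFun x := g • x
  map_add' x y := by simpa using hsys.smul_add_smul g 1 x y
  map_smul' c x := by simpa [hsys.smul_zero g] using hsys.smul_add_smul g c x 0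
  norm_map' := hsys.norm_smul g

def lambdaIsometry (hsys : SpectralDecompositionSystem H X G γ Λ τ) (a : ι) : X →ₗᵢ[ℝ] H :=
  ⟨Λ a, hsys.norm_lambda a⟩

theorem inner_smul_smul (hsys : SpectralDecompositionSystem H X G γ Λ τ) (g : G) (x y : X) :
    ⟪g • x, g • y⟫_ℝ = ⟪x, y⟫_ℝ :=
  (hsys.smulLinearIsometry g).inner_map_map x y

theorem inner_lambda_lambda (hsys : SpectralDecompositionSystem H X G γ Λ τ) (a : ι) (x y : X) :
    ⟪Λ a x, Λ a y⟫_ℝ = ⟪x, y⟫_ℝ :=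
  (hsys.lambdaIsometry a).inner_map_map x y

theorem norm_gamma (hsys : SpectralDecompositionSystem H X G γ Λ τ) (Z : H) : ‖γ Z‖ = ‖Z‖ := by
  obtain ⟨a, ha⟩ := hsys.exists_decomp Z
  conv_rhs => rw [ha, hsys.norm_lambda]

theorem norm_tau (hsys : SpectralDecompositionSystem H X G γ Λ τ) (x : X) : ‖τ x‖ = ‖x‖ := by
  obtain ⟨g, hg⟩ := hsys.tau_orbit x
  rw [hg, hsys.norm_smul]

theorem tau_tau (hsys : SpectralDecompositionSystem H X G γ Λ τ) (x : X) : τ (τ x) = τ x := by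
  obtain ⟨g, hg⟩ := hsys.tau_orbit x
  rw [hg, hsys.tau_smul, ← hg]

theorem inner_le_inner_tau [Nonempty ι] (hsys : SpectralDecompositionSystem H X G γ Λ τ)
    (x y : X) : ⟪x, y⟫_ℝ ≤ ⟪τ x, τ y⟫_ℝ := by
  obtain ⟨a⟩ := ‹Nonempty ι›
  calc ⟪x, y⟫_ℝ = ⟪Λ a x, Λ a y⟫_ℝ := (hsys.inner_lambda_lambda a x y).symm
    _ ≤ ⟪γ (Λ a x), γ (Λ a y)⟫_ℝ := hsys.inner_le _ _
    _ = ⟪τ x, τ y⟫_ℝ := by rw [hsys.gamma_lambda, hsys.gamma_lambda]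

theorem lipschitzWith_tau [Nonempty ι] (hsys : SpectralDecompositionSystem H X G γ Λ τ) :
    LipschitzWith 1 τ := by
  refine LipschitzWith.of_dist_le_mul fun x y => ?_
  rw [NNReal.coe_one, one_mul, dist_eq_norm, dist_eq_norm]
  refine (sq_le_sq₀ (norm_nonneg _) (norm_nonneg _)).mp ?_
  rw [norm_sub_sq_real, norm_sub_sq_real, hsys.norm_tau, hsys.norm_tau]
  linarith [hsys.inner_le_inner_tau x y]

theorem orbit_eq_preimage_tau (hsys : SpectralDecompositionSystem H X G γ Λ τ) (y : X) :
    MulAction.orbit G y = τ ⁻¹' {τ y} := by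
  ext w
  constructor
  · rintro ⟨g, rfl⟩
    exact hsys.tau_smul g y
  · intro hw
    obtain ⟨g, hg⟩ := hsys.tau_orbit w
    obtain ⟨g', hg'⟩ := hsys.tau_orbit y
    refine ⟨g⁻¹ * g', ?_⟩
    show (g⁻¹ * g') • y = w
    rw [mul_smul, ← hg', ← mem_singleton_iff.mp hw, hg, inv_smul_smul]

theorem isCompact_orbit [Nonempty ι] [FiniteDimensional ℝ X]
    (hsys : SpectralDecompositionSystem H X G γ Λ τ) (y : X) :
    IsCompact (MulAction.orbit G y) := by
  refine Metric.isCompact_of_isClosed_isBounded ?_ ?_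
  · rw [hsys.orbit_eq_preimage_tau]
    exact isClosed_singleton.preimage hsys.lipschitzWith_tau.continuous
  · refine (Metric.isBounded_closedBall (x := 0) (r := ‖y‖)).subset ?_
    rintro _ ⟨g, rfl⟩
    simp [hsys.norm_smul]

theorem exists_inner_smul_eq_inner_tau (hsys : SpectralDecompositionSystem H X G γ Λ τ)
    (u y : X) : ∃ g : G, ⟪u, g • y⟫_ℝ = ⟪τ u, τ y⟫_ℝ := by
  obtain ⟨g, hg⟩ := hsys.tau_orbit u
  obtain ⟨g', hg'⟩ := hsys.tau_orbit y
  refine ⟨g⁻¹ * g', ?_⟩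
  rw [hg, hg', ← hsys.inner_smul_smul g u, mul_smul, smul_inv_smul]

theorem mem_convexHull_orbit_of_inner_le [Nonempty ι] [FiniteDimensional ℝ X]
    (hsys : SpectralDecompositionSystem H X G γ Λ τ) {y z : X}
    (h : ∀ u, ⟪u, z⟫_ℝ ≤ ⟪τ u, τ y⟫_ℝ) : z ∈ convexHull ℝ (MulAction.orbit G y) := by
  by_contra hz
  obtain ⟨f, c, hf, hfz⟩ := geometric_hahn_banach_closed_point (convex_convexHull ℝ _)
    (hsys.isCompact_orbit y).convexHull_of_finiteDimensional.isClosed hz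
  set u := (InnerProductSpace.toDual ℝ X).symm f
  obtain ⟨g, hg⟩ := hsys.exists_inner_smul_eq_inner_tau u y
  have hgy := hf _ (subset_convexHull ℝ _ ⟨g, rfl⟩)
  rw [← InnerProductSpace.toDual_symm_apply] at hgy hfz
  linarith [h u]

theorem gamma_combo_mem_convexHull_orbit [Nonempty ι] [FiniteDimensional ℝ X]
    (hsys : SpectralDecompositionSystem H X G γ Λ τ) (Z₁ Z₂ : H) {t s : ℝ} (ht : 0 ≤ t)
    (hs : 0 ≤ s) : γ (t • Z₁ + s • Z₂) ∈
      convexHull ℝ (MulAction.orbit G (t • γ Z₁ + s • γ Z₂)) := by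
  refine hsys.mem_convexHull_orbit_of_inner_le fun u => ?_
  obtain ⟨a, ha⟩ := hsys.exists_decomp (t • Z₁ + s • Z₂)
  have hle : ∀ Z, ⟪Λ a u, Z⟫_ℝ ≤ ⟪τ u, γ Z⟫_ℝ := fun Z =>
    hsys.gamma_lambda a u ▸ hsys.inner_le (Λ a u) Z
  calc ⟪u, γ (t • Z₁ + s • Z₂)⟫_ℝ = ⟪Λ a u, t • Z₁ + s • Z₂⟫_ℝ := by
        conv_rhs => rw [ha, hsys.inner_lambda_lambda]
    _ = t * ⟪Λ a u, Z₁⟫_ℝ + s * ⟪Λ a u, Z₂⟫_ℝ := by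
        rw [inner_add_right, real_inner_smul_right, real_inner_smul_right]
    _ ≤ t * ⟪τ u, γ Z₁⟫_ℝ + s * ⟪τ u, γ Z₂⟫_ℝ := by gcongr <;> exact hle _
    _ = ⟪τ u, t • γ Z₁ + s • γ Z₂⟫_ℝ := by
        rw [inner_add_right, real_inner_smul_right, real_inner_smul_right]
    _ ≤ ⟪τ (τ u), τ (t • γ Z₁ + s • γ Z₂)⟫_ℝ := hsys.inner_le_inner_tau _ _
    _ = ⟪τ u, τ (t • γ Z₁ + s • γ Z₂)⟫_ℝ := by rw [hsys.tau_tau]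

theorem smul_mem_convexHull (hsys : SpectralDecompositionSystem H X G γ Λ τ) {D : Set X}
    (hD : ∀ x ∈ D, ∀ g : G, g • x ∈ D) {x : X} (hx : x ∈ convexHull ℝ D) (g : G) :
    g • x ∈ convexHull ℝ D := by
  have h := mem_image_of_mem (hsys.smulLinearIsometry g).toLinearMap hx
  rw [LinearMap.image_convexHull] at h
  exact convexHull_mono (image_subset_iff.2 fun y hy => hD y hy g) h

theorem mapsTo_lambda (hsys : SpectralDecompositionSystem H X G γ Λ τ) {D : Set X}
    (hD : ∀ x ∈ D, ∀ g : G, g • x ∈ D) (a : ι) : MapsTo (Λ a) D (γ ⁻¹' D) := fun x hx => by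
  obtain ⟨g, hg⟩ := hsys.tau_orbit x
  rw [mem_preimage, hsys.gamma_lambda, hg]
  exact hD x hx g

theorem convex_preimage_gamma [Nonempty ι] [FiniteDimensional ℝ X]
    (hsys : SpectralDecompositionSystem H X G γ Λ τ) {C : Set X} (hC : Convex ℝ C)
    (hCinv : ∀ x ∈ C, ∀ g : G, g • x ∈ C) : Convex ℝ (γ ⁻¹' C) :=
  fun Z₁ h₁ Z₂ h₂ _ _ ht hs hts => convexHull_orbit_subset hCinv hC (hC h₁ h₂ ht hs hts)
    (hsys.gamma_combo_mem_convexHull_orbit Z₁ Z₂ ht hs)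

theorem convexHull_preimage_gamma [Nonempty ι] [FiniteDimensional ℝ X]
    (hsys : SpectralDecompositionSystem H X G γ Λ τ) {D : Set X}
    (hD : ∀ x ∈ D, ∀ g : G, g • x ∈ D) : convexHull ℝ (γ ⁻¹' D) = γ ⁻¹' convexHull ℝ D := by
  refine (convexHull_min (preimage_mono (subset_convexHull ℝ D))
    (hsys.convex_preimage_gamma (convex_convexHull ℝ D) fun x hx g =>
      hsys.smul_mem_convexHull hD hx g)).antisymm fun Z hZ => ?_
  obtain ⟨a, ha⟩ := hsys.exists_decomp Z
  have h := mem_image_of_mem (Λ a) (show γ Z ∈ convexHull ℝ D from hZ)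
  rw [LinearMap.image_convexHull, ← ha] at h
  exact convexHull_mono (hsys.mapsTo_lambda hD a).image_subset h

theorem gamma_mem_extremePoints (hsys : SpectralDecompositionSystem H X G γ Λ τ) {D : Set X}
    (hD : ∀ x ∈ D, ∀ g : G, g • x ∈ D) {Z : H} (hZ : Z ∈ (γ ⁻¹' D).extremePoints ℝ) :
    γ Z ∈ D.extremePoints ℝ := by
  obtain ⟨a, ha⟩ := hsys.exists_decomp Z
  refine mem_extremePoints_of_injective (hsys.lambdaIsometry a).injective
    (hsys.mapsTo_lambda hD a) hZ.1 ?_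
  show Λ a (γ Z) ∈ _
  rwa [← ha]

theorem mem_extremePoints_preimage_gamma [Nonempty ι] [FiniteDimensional ℝ X]
    (hsys : SpectralDecompositionSystem H X G γ Λ τ) {D : Set X}
    (hD : ∀ x ∈ D, ∀ g : G, g • x ∈ D) (hDc : Convex ℝ D) {Z : H}
    (hZ : γ Z ∈ D.extremePoints ℝ) : Z ∈ (γ ⁻¹' D).extremePoints ℝ := by
  refine mem_extremePoints_iff_left.mpr ⟨hZ.1, fun Z₁ hZ₁ Z₂ hZ₂ hseg => ?_⟩
  obtain ⟨α, β, hα, hβ, hαβ, rfl⟩ := hseg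
  set y := α • γ Z₁ + β • γ Z₂
  have hyD : y ∈ D := hDc hZ₁ hZ₂ hα.le hβ.le hαβ
  obtain ⟨g, hg : g • y = γ (α • Z₁ + β • Z₂)⟩ : γ (α • Z₁ + β • Z₂) ∈ MulAction.orbit G y :=
    extremePoints_convexHull_subset <|
      inter_extremePoints_subset_extremePoints_of_subset (convexHull_orbit_subset hD hDc hyD)
        ⟨hsys.gamma_combo_mem_convexHull_orbit Z₁ Z₂ hα.le hβ.le, hZ⟩
  have hy : y ∈ D.extremePoints ℝ :=
    mem_extremePoints_of_injective (hsys.smulLinearIsometry g).injective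
      (fun x hx => hD x hx g) hyD (show g • y ∈ _ from hg ▸ hZ)
  have h₁ : γ Z₁ = y :=
    (mem_extremePoints_iff_left.mp hy).2 _ hZ₁ _ hZ₂ ⟨α, β, hα, hβ, hαβ, rfl⟩
  have h₂ : γ Z₂ = y := (mem_extremePoints_iff_left.mp hy).2 _ hZ₂ _ hZ₁
    ⟨β, α, hβ, hα, (add_comm β α).trans hαβ, add_comm _ _⟩
  have hnorm : ∀ W, γ W = y → ‖W‖ ≤ ‖α • Z₁ + β • Z₂‖ := fun W hW => by
    rw [← hsys.norm_gamma, hW, ← hsys.norm_gamma (α • Z₁ + β • Z₂), ← hg, hsys.norm_smul]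
  exact eq_of_mem_openSegment_of_norm_le ⟨α, β, hα, hβ, hαβ, rfl⟩ (hnorm Z₁ h₁) (hnorm Z₂ h₂)

end SpectralDecompositionSystem

theorem spectral_set_convexHull_and_extremePoints_general
    (γ : 𝓗 → 𝓧) (Λ : A → 𝓧 →ₗ[ℝ] 𝓗) (τ : 𝓧 → 𝓧)
    (hsys : SpectralDecompositionSystem 𝓗 𝓧 S γ Λ τ)
    (D : Set 𝓧) (hD : ∀ x ∈ D, ∀ s : S, s • x ∈ D) :
    convexHull ℝ (γ ⁻¹' D) = γ ⁻¹' (convexHull ℝ D) ∧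
    (Convex ℝ D →
      Set.extremePoints ℝ (γ ⁻¹' D) = γ ⁻¹' (Set.extremePoints ℝ D)) := by
  refine ⟨hsys.convexHull_preimage_gamma hD, fun hDc => ?_⟩
  ext Z
  exact ⟨hsys.gamma_mem_extremePoints hD, hsys.mem_extremePoints_preimage_gamma hD hDc⟩

theorem spectral_set_convexHull_and_extremePoints
    (γ : 𝓗 → 𝓧) (Λ : A → 𝓧 →ₗ[ℝ] 𝓗) (τ : 𝓧 → 𝓧)
    (hsys : SpectralDecompositionSystem 𝓗 𝓧 S γ Λ τ)
    (D : Set 𝓧) (hne : D.Nonempty) (hD : ∀ x ∈ D, ∀ s : S, s • x ∈ D) :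
    convexHull ℝ (γ ⁻¹' D) = γ ⁻¹' (convexHull ℝ D) ∧
    (Convex ℝ D →
      Set.extremePoints ℝ (γ ⁻¹' D) = γ ⁻¹' (Set.extremePoints ℝ D)) :=
  spectral_set_convexHull_and_extremePoints_general γ Λ τ hsys D hD
end

section
/- (Reduced minimization principle, minimizer characterization.) Let 𝔥 be a Euclidean space with spectral decomposition system (𝒳, S, γ, (Λ_a)_{a∈A}), let φ : 𝒳 → (−∞, +∞] be proper (not identically +∞) and S-invariant (φ(s • x) = φ(x) for all s ∈ S, x ∈ 𝒳), and let Y ∈ 𝔥. Set 𝔖 = Argmin_{Z ∈ 𝔥} ( φ(γ(Z)) − ⟨Z, Y⟩ ) and S₀ = Argmin_{z ∈ 𝒳} ( φ(z) − ⟨z, γ(Y)⟩ ). Then for every X ∈ 𝔥: X ∈ 𝔖 if and only if γ(X) ∈ S₀ and there exists a ∈ A with X = Λ_a(γ(X)) and Y = Λ_a(γ(Y)). -/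
/-!
Since `⟪Z, Y⟫ ≤ ⟪γ Z, γ Y⟫`, the objective on `𝓗` at `Z` dominates the
reduced objective at `γ Z`, and the two infima agree: writing `Y = Λ a (γ Y)`, the point `Λ a x`
has objective value `φ (τ x) - ⟪x, γ Y⟫ = φ x - ⟪x, γ Y⟫`. So `Z` is a minimizer iff `γ Z` is a
reduced minimizer and `⟪Z, Y⟫ = ⟪γ Z, γ Y⟫`. Equality in the trace inequality forces
`γ (Z + Y) = γ Z + γ Y`, and then any decomposition `Z + Y = Λ a (γ (Z + Y))` decomposes `Z` and
`Y` simultaneously.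
-/

open scoped InnerProductSpace

variable {𝓗 𝓧 : Type*} [NormedAddCommGroup 𝓗] [InnerProductSpace ℝ 𝓗]
  [FiniteDimensional ℝ 𝓗] [NormedAddCommGroup 𝓧] [InnerProductSpace ℝ 𝓧]
  [FiniteDimensional ℝ 𝓧] {S : Type*} [Group S] [MulAction S 𝓧]
  {A : Type*} [Nonempty A]

/-- `Argmin g` is the set of minimizers of `g` if `inf g < +∞`, and `∅` otherwise. -/
def ArgminE {V : Type*} (g : V → EReal) : Set V :=
  {x | (⨅ y, g y) < ⊤ ∧ g x = ⨅ y, g y}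

theorem eq_of_norm_eq_of_norm_sq_le_inner {E : Type*} [NormedAddCommGroup E]
    [InnerProductSpace ℝ E] {x y : E} (hnorm : ‖x‖ = ‖y‖) (hle : ‖x‖ ^ 2 ≤ ⟪x, y⟫_ℝ) :
    x = y := by
  have hsq : ‖x - y‖ ^ 2 ≤ 0 := by
    rw [norm_sub_sq_real, ← hnorm]
    linarith
  exact sub_eq_zero.mp (norm_eq_zero.mp (pow_eq_zero_iff two_ne_zero |>.mp
    (le_antisymm hsq (sq_nonneg _))))

theorem EReal.sub_coe_eq_sub_coe_iff {x : EReal} (hbot : x ≠ ⊥) (htop : x ≠ ⊤) (r s : ℝ) :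
    x - r = x - s ↔ r = s := by
  rw [← EReal.coe_toReal htop hbot, ← EReal.coe_sub, ← EReal.coe_sub, EReal.coe_eq_coe_iff,
    sub_right_inj]

theorem mem_argminE_iff_of_le_of_iInf_eq {α β : Type*} {f : α → EReal} {g : β → EReal}
    {p : α → β} (hle : ∀ z, g (p z) ≤ f z) (hinf : ⨅ z, f z = ⨅ x, g x) (z : α) :
    z ∈ ArgminE f ↔ p z ∈ ArgminE g ∧ f z = g (p z) := by
  simp only [ArgminE, Set.mem_ofPred_eq, hinf]
  constructor
  · rintro ⟨hlt, hz⟩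
    have hpz : g (p z) = ⨅ x, g x := le_antisymm (hz ▸ hle z) (iInf_le g (p z))
    exact ⟨⟨hlt, hpz⟩, hz.trans hpz.symm⟩
  · rintro ⟨⟨hlt, hpz⟩, hz⟩
    exact ⟨hlt, hz.trans hpz⟩

namespace SpectralDecompositionSystem

variable {𝔥 𝒳 : Type*} [NormedAddCommGroup 𝔥] [InnerProductSpace ℝ 𝔥]
  [NormedAddCommGroup 𝒳] [InnerProductSpace ℝ 𝒳] {S : Type*} [Group S] [MulAction S 𝒳]
  {A : Type*} {γ : 𝔥 → 𝒳} {Λ : A → 𝒳 →ₗ[ℝ] 𝔥} {τ : 𝒳 → 𝒳}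
  (hsys : SpectralDecompositionSystem 𝔥 𝒳 S γ Λ τ)
include hsys

theorem inner_lambda_lambda_s14 (a : A) (x y : 𝒳) : ⟪Λ a x, Λ a y⟫_ℝ = ⟪x, y⟫_ℝ :=
  (⟨Λ a, hsys.norm_lambda a⟩ : 𝒳 →ₗᵢ[ℝ] 𝔥).inner_map_map x y

theorem norm_gamma_s14 (W : 𝔥) : ‖γ W‖ = ‖W‖ := by
  obtain ⟨a, ha⟩ := hsys.exists_decomp W
  conv_rhs => rw [ha, hsys.norm_lambda]

theorem tau_gamma (W : 𝔥) : τ (γ W) = γ W := by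
  obtain ⟨a, ha⟩ := hsys.exists_decomp W
  rw [← hsys.gamma_lambda, ← ha]

theorem apply_tau_of_smul_invariant {β : Type*} {φ : 𝒳 → β}
    (hφ : ∀ (s : S) (x : 𝒳), φ (s • x) = φ x) (x : 𝒳) : φ (τ x) = φ x := by
  obtain ⟨s, hs⟩ := hsys.tau_orbit x
  rw [hs, hφ]

theorem gamma_add_of_inner_eq {W V : 𝔥} (h : ⟪W, V⟫_ℝ = ⟪γ W, γ V⟫_ℝ) :
    γ (W + V) = γ W + γ V := by
  refine eq_of_norm_eq_of_norm_sq_le_inner ?_ ?_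
  · rw [← sq_eq_sq₀ (norm_nonneg _) (norm_nonneg _), norm_add_sq_real, hsys.norm_gamma_s14,
      norm_add_sq_real, hsys.norm_gamma_s14, hsys.norm_gamma_s14, h]
  · calc ‖γ (W + V)‖ ^ 2 = ⟪W + V, W⟫_ℝ + ⟪W + V, V⟫_ℝ := by
          rw [hsys.norm_gamma_s14, ← inner_add_right, real_inner_self_eq_norm_sq]
      _ ≤ ⟪γ (W + V), γ W⟫_ℝ + ⟪γ (W + V), γ V⟫_ℝ :=
          add_le_add (hsys.inner_le _ _) (hsys.inner_le _ _)
      _ = ⟪γ (W + V), γ W + γ V⟫_ℝ := (inner_add_right _ _ _).symm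

theorem eq_lambda_gamma_of_add_eq {W V : 𝔥} {a : A} (h : W + V = Λ a (γ W + γ V)) :
    W = Λ a (γ W) := by
  refine eq_of_norm_eq_of_norm_sq_le_inner (by rw [hsys.norm_lambda, hsys.norm_gamma_s14]) ?_
  have hV : ⟪V, Λ a (γ W)⟫_ℝ ≤ ⟪γ V, γ W⟫_ℝ := by
    simpa only [hsys.gamma_lambda, hsys.tau_gamma] using hsys.inner_le V (Λ a (γ W))
  have hsum : ⟪W, Λ a (γ W)⟫_ℝ + ⟪V, Λ a (γ W)⟫_ℝ = ‖W‖ ^ 2 + ⟪γ V, γ W⟫_ℝ := by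
    rw [← inner_add_left, h, map_add, inner_add_left, hsys.inner_lambda_lambda_s14,
      hsys.inner_lambda_lambda_s14, real_inner_self_eq_norm_sq, hsys.norm_gamma_s14]
  linarith

theorem inner_eq_inner_gamma_iff (W V : 𝔥) :
    ⟪W, V⟫_ℝ = ⟪γ W, γ V⟫_ℝ ↔ ∃ a : A, W = Λ a (γ W) ∧ V = Λ a (γ V) := by
  constructor
  · intro h
    obtain ⟨a, ha⟩ := hsys.exists_decomp (W + V)
    rw [hsys.gamma_add_of_inner_eq h] at ha
    exact ⟨a, hsys.eq_lambda_gamma_of_add_eq ha,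
      hsys.eq_lambda_gamma_of_add_eq (by rwa [add_comm, add_comm (γ V)])⟩
  · rintro ⟨a, hW, hV⟩
    rw [hW, hV, hsys.inner_lambda_lambda_s14, hsys.gamma_lambda, hsys.gamma_lambda,
      hsys.tau_gamma, hsys.tau_gamma]

theorem iInf_comp_gamma_sub_inner {φ : 𝒳 → EReal} (hφ : ∀ (s : S) (x : 𝒳), φ (s • x) = φ x)
    (Y : 𝔥) : ⨅ W, φ (γ W) - ((⟪W, Y⟫_ℝ : ℝ) : EReal) = ⨅ x, φ x - ((⟪x, γ Y⟫_ℝ : ℝ) : EReal) := by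
  refine le_antisymm (le_iInf fun x => ?_) (le_iInf fun W => ?_)
  · obtain ⟨a, ha⟩ := hsys.exists_decomp Y
    refine iInf_le_of_le (Λ a x) (le_of_eq ?_)
    rw [hsys.gamma_lambda, hsys.apply_tau_of_smul_invariant hφ, ha, hsys.inner_lambda_lambda_s14,
      ← ha]
  · exact iInf_le_of_le (γ W) (EReal.sub_le_sub le_rfl (EReal.coe_le_coe (hsys.inner_le W Y)))

end SpectralDecompositionSystem

theorem reduced_minimization_mem_argmin_general
    (γ : 𝓗 → 𝓧) (Λ : A → 𝓧 →ₗ[ℝ] 𝓗) (τ : 𝓧 → 𝓧)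
    (hsys : SpectralDecompositionSystem 𝓗 𝓧 S γ Λ τ)
    (φ : 𝓧 → EReal) (hbot : ∀ x, φ x ≠ ⊥)
    (hφ : ∀ (s : S) (x : 𝓧), φ (s • x) = φ x) (Y : 𝓗) (Z : 𝓗) :
    Z ∈ ArgminE (fun W => φ (γ W) - ((⟪W, Y⟫_ℝ : ℝ) : EReal)) ↔
      (γ Z ∈ ArgminE (fun x => φ x - ((⟪x, γ Y⟫_ℝ : ℝ) : EReal)) ∧
        ∃ a : A, Z = Λ a (γ Z) ∧ Y = Λ a (γ Y)) := by
  rw [mem_argminE_iff_of_le_of_iInf_eq (p := γ)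
    (fun W => EReal.sub_le_sub le_rfl (EReal.coe_le_coe (hsys.inner_le W Y)))
    (hsys.iInf_comp_gamma_sub_inner hφ Y), ← hsys.inner_eq_inner_gamma_iff]
  refine and_congr_right fun hmin => ?_
  have htop : φ (γ Z) ≠ ⊤ := by
    intro h
    have hlt : φ (γ Z) - ((⟪γ Z, γ Y⟫_ℝ : ℝ) : EReal) < ⊤ := hmin.2.trans_lt hmin.1
    rw [h, EReal.top_sub_coe] at hlt
    exact lt_irrefl _ hlt
  exact EReal.sub_coe_eq_sub_coe_iff (hbot _) htop _ _

/-- Reduced minimization principle, minimizer characterization. -/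
theorem reduced_minimization_mem_argmin
    (γ : 𝓗 → 𝓧) (Λ : A → 𝓧 →ₗ[ℝ] 𝓗) (τ : 𝓧 → 𝓧)
    (hsys : SpectralDecompositionSystem 𝓗 𝓧 S γ Λ τ)
    (φ : 𝓧 → EReal) (hproper : ∃ x, φ x ≠ ⊤) (hbot : ∀ x, φ x ≠ ⊥)
    (hφ : ∀ (s : S) (x : 𝓧), φ (s • x) = φ x) (Y : 𝓗) (Z : 𝓗) :
    Z ∈ ArgminE (fun W => φ (γ W) - ((⟪W, Y⟫_ℝ : ℝ) : EReal)) ↔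
      (γ Z ∈ ArgminE (fun x => φ x - ((⟪x, γ Y⟫_ℝ : ℝ) : EReal)) ∧
        ∃ a : A, Z = Λ a (γ Z) ∧ Y = Λ a (γ Y)) :=
  reduced_minimization_mem_argmin_general γ Λ τ hsys φ hbot hφ Y Z
end
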